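/- arXiv:1911.09897 — 3 statements merged into one kernel-verified Lean document; each statement's English description precedes it below -/
import Mathlib

section
/- Let K ≥ 2 and let MLY(σ_K) ⊆ Σ_K × Σ_K be the set of mean Li–Yorke pairs of the shift σ_K. Then dim_H MLY(σ_K) = 1 and the 1-dimensional Hausdorff measure of MLY(σ_K) equals +∞. -/
open Filter Set MeasureTheory Topology TopologicalSpace

noncomputable section

/-- The symbolic space `Σ_K` on `K` symbols: sequences `ℕ → Fin K`. -/
def SymbSp (K : ℕ) : Type := ℕ → Fin K

namespace SymbSp

variable {K : ℕ}

theorem exists_ne {x y : SymbSp K} (h : ¬x = y) : ∃ i, x i ≠ y i := by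
  by_contra hc
  push_neg at hc
  exact h (funext hc)

open Classical in
/-- The metric `ρ(x,y) = K^{-δ(x,y)}` on `Σ_K`. -/
def sdist (x y : SymbSp K) : ℝ :=
  if h : x = y then 0 else ((K : ℝ))⁻¹ ^ Nat.find (exists_ne h)

theorem sdist_self (x : SymbSp K) : sdist x x = 0 := by
  unfold sdist
  exact dif_pos rfl

open Classical in
theorem sdist_eq {x y : SymbSp K} (h : ¬x = y) :
    sdist x y = ((K : ℝ))⁻¹ ^ Nat.find (exists_ne h) := by
  unfold sdist
  exact dif_neg h

theorem sdist_nonneg' (x y : SymbSp K) : 0 ≤ sdist x y := by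
  unfold sdist
  split
  · exact le_rfl
  · positivity

theorem inv_cast_le_one (K : ℕ) : ((K : ℝ))⁻¹ ≤ 1 := by
  rcases Nat.eq_zero_or_pos K with h | h
  · simp [h]
  · exact inv_le_one_of_one_le₀ (by exact_mod_cast h)

open Classical in
theorem eq_of_lt_find {x y : SymbSp K} (h : ¬x = y) {i : ℕ}
    (hi : i < Nat.find (exists_ne h)) : x i = y i :=
  not_not.mp (Nat.find_min (exists_ne h) hi)

open Classical in
theorem sdist_le_of_agree {x y : SymbSp K} {n : ℕ} (h : ∀ i < n, x i = y i) :
    sdist x y ≤ ((K : ℝ))⁻¹ ^ n := by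
  by_cases hxy : x = y
  · rw [hxy, sdist_self]; positivity
  · rw [sdist_eq hxy]
    apply pow_le_pow_of_le_one (by positivity) (inv_cast_le_one K)
    rw [Nat.le_find_iff]
    intro m hm
    simp only [ne_eq, not_not]
    exact h m hm

open Classical in
theorem sdist_comm (x y :  SymbSp K) : sdist x y = sdist y x := by
  by_cases h : x = y
  · rw [h]
  · rw [sdist_eq h, sdist_eq (fun hyx => h hyx.symm)]
    congr 1
    exact le_antisymm (Nat.find_mono fun n hn => hn.symm)
      (Nat.find_mono fun n hn => hn.symm)

open Classical in
theorem sdist_le_max (x y z : SymbSp K) : sdist x z ≤ max (sdist x y) (sdist y z) := by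
  by_cases hxz : x = z
  · rw [hxz, sdist_self]
    exact le_max_of_le_left (sdist_nonneg' _ _)
  by_cases hxy : x = y
  · rw [hxy]; exact le_max_right _ _
  by_cases hyz : y = z
  · rw [← hyz]; exact le_max_left _ _
  rcases le_total (Nat.find (exists_ne hxy)) (Nat.find (exists_ne hyz)) with hle | hle
  · refine le_max_of_le_left ?_
    rw [sdist_eq hxy]
    exact sdist_le_of_agree fun i hi =>
      (eq_of_lt_find hxy hi).trans (eq_of_lt_find hyz (lt_of_lt_of_le hi hle))
  · refine le_max_of_le_right ?_
    rw [sdist_eq hyz]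
    exact sdist_le_of_agree fun i hi =>
      (eq_of_lt_find hxy (lt_of_lt_of_le hi hle)).trans (eq_of_lt_find hyz hi)

theorem eq_of_sdist_eq_zero {x y : SymbSp K} (h : sdist x y = 0) : x = y := by
  by_contra hxy
  rw [sdist_eq hxy] at h
  have hK : (0 : ℝ) < (K : ℝ) := by exact_mod_cast Fin.pos (x 0)
  exact absurd h (ne_of_gt (pow_pos (inv_pos.mpr hK) _))

instance : MetricSpace (SymbSp K) where
  dist := sdist
  dist_self := sdist_self
  dist_comm := sdist_comm
  dist_triangle x y z :=
    (sdist_le_max x y z).trans (max_le_add_of_nonneg (sdist_nonneg' _ _) (sdist_nonneg' _ _))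
  eq_of_dist_eq_zero := fun h => eq_of_sdist_eq_zero h

instance : MeasurableSpace (SymbSp K) := borel _

instance : BorelSpace (SymbSp K) := ⟨rfl⟩

instance : SeparableSpace (SymbSp K) := by
  obtain hK | hK | hK : K = 0 ∨ K = 1 ∨ 2 ≤ K := by omega
  · subst hK
    haveI : IsEmpty (SymbSp 0) := ⟨fun x => (x 0).elim0⟩
    exact ⟨⟨Set.univ, Set.countable_univ, dense_univ⟩⟩
  · subst hK
    haveI : Subsingleton (SymbSp 1) := ⟨fun x y => funext fun i => Subsingleton.elim _ _⟩
    exact ⟨⟨Set.univ, Set.countable_univ, dense_univ⟩⟩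
  · refine ⟨⟨Set.range (fun w : (Σ n : ℕ, (Fin n → Fin K)) =>
      (fun i => if h : i < w.1 then w.2 ⟨i, h⟩ else ⟨0, by omega⟩ : SymbSp K)),
      Set.countable_range _, ?_⟩⟩
    rw [Metric.dense_iff]
    intro x r hr
    obtain ⟨n, hn⟩ : ∃ n : ℕ, ((K : ℝ))⁻¹ ^ n < r :=
      exists_pow_lt_of_lt_one hr (inv_lt_one_of_one_lt₀ (by exact_mod_cast hK))
    refine ⟨(fun i => if h : i < n then x i else ⟨0, by omega⟩ : SymbSp K),
      ?_, ⟨⟨n, fun j => x j⟩, rfl⟩⟩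
    refine Metric.mem_ball.mpr ?_
    exact lt_of_le_of_lt (sdist_le_of_agree fun i hi => dif_pos hi) hn

instance : SecondCountableTopology (SymbSp K) :=
  UniformSpace.secondCountable_of_separable _

end SymbSp

/-- The shift map `σ_K` on `Σ_K`. -/
def shift (K : ℕ) : SymbSp K → SymbSp K := fun x i => x (i + 1)

end
/-- The set of mean Li–Yorke pairs of `σ_K`. -/
def MLYset (K : ℕ) : Set (SymbSp K × SymbSp K) :=
  {z | Filter.liminf (fun n : ℕ =>
          (∑ i ∈ Finset.range n, dist ((shift K)^[i] z.1) ((shift K)^[i] z.2)) / n)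
          Filter.atTop = 0 ∧
       0 < Filter.limsup (fun n : ℕ =>
          (∑ i ∈ Finset.range n, dist ((shift K)^[i] z.1) ((shift K)^[i] z.2)) / n)
          Filter.atTop}


open Metric
open scoped ENNReal Nat Finset

/-!
Lower bound. Let `π` be a fixed-point-free permutation of the alphabet and `D_s` the union of the
intervals `[(2k+1)!, (2k+2)!)`, `k ≥ s`; applying `π` to `z` at the positions in `D_s` gives `z'`.
The disagreement set `D_s` has upper density at least `1/2`, but it also has the gaps
`[(2k+2)!, (2k+3)!)` of relative length tending to one, inside which the distance of the shifted
points decays geometrically; so `(z, z')` is mean Li–Yorke. For distinct `s` the graphs of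
`z ↦ z'` are disjoint closed subsets of `MLY(σ_K)`, each projecting onto `Σ_K`, which maps
`1`-Lipschitz onto `[0, 1]` by base-`K` expansion; hence `H¹(MLY(σ_K)) = ∞`.

Upper bound. Cut sequences into blocks of length `L`. If the mean distance along the orbit of
`(x, y)` is arbitrarily small along a subsequence, then for infinitely many `j` the first `j`
blocks of `x` and `y` differ in at most `j / (K L)` blocks. Such pairs of prefixes number at most
`K^{Lj} 4^j` and span cylinders of diameter `K^{-Lj}`, so for `d > 1` and `L` large the sums
`∑_j K^{Lj} 4^j K^{-Ljd}` converge and a Borel–Cantelli covering argument gives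
`H^d(MLY(σ_K)) = 0`.
-/

theorem sum_range_inv_two_pow_sub_le_one (n : ℕ) :
    ∑ i ∈ Finset.range n, (2 : ℝ)⁻¹ ^ (n - i) ≤ 1 := by
  rw [← Finset.sum_range_reflect]
  calc ∑ i ∈ Finset.range n, (2 : ℝ)⁻¹ ^ (n - (n - 1 - i))
      = 2⁻¹ * ∑ i ∈ Finset.range n, (1 / 2 : ℝ) ^ i := by
        rw [Finset.mul_sum]
        refine Finset.sum_congr rfl fun i hi => ?_
        rw [show n - (n - 1 - i) = i + 1 by have := Finset.mem_range.mp hi; omega, pow_succ']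
        norm_num
    _ ≤ 2⁻¹ * 2 := by gcongr; exact sum_geometric_two_le n
    _ = 1 := by norm_num

theorem hausdorffMeasure_eq_zero_of_frequently_mem {X : Type*} [EMetricSpace X]
    [MeasurableSpace X] [BorelSpace X] {ι : ℕ → Type*} [∀ j, Countable (ι j)] {d : ℝ}
    {s : Set X} (t : ∀ j, ι j → Set X) {r : ℕ → ℝ≥0∞} (hr : Tendsto r atTop (𝓝 0))
    (hr_anti : Antitone r) (ht : ∀ j i, ediam (t j i) ≤ r j)
    (hsum : ∑' j, ∑' i, ediam (t j i) ^ d ≠ ∞) (hs : ∀ x ∈ s, ∃ᶠ j in atTop, ∃ i, x ∈ t j i) :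
    μH[d] s = 0 := by
  have hcover : ∀ N, s ⊆ ⋃ i : Σ k, ι (k + N), t (i.1 + N) i.2 := fun N x hx => by
    obtain ⟨j, hNj, i, hi⟩ := (hs x hx).forall_exists_of_atTop N
    obtain ⟨k, rfl⟩ := Nat.exists_eq_add_of_le' hNj
    exact mem_iUnion.mpr ⟨⟨k, i⟩, hi⟩
  refine le_antisymm ?_ zero_le
  calc μH[d] s ≤ liminf (fun N => ∑' i : Σ k, ι (k + N), ediam (t (i.1 + N) i.2) ^ d) atTop :=
        Measure.hausdorffMeasure_le_liminf_tsum d s r hr _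
          (Eventually.of_forall fun N i => (ht _ _).trans (hr_anti (by omega)))
          (Eventually.of_forall hcover)
    _ = 0 := by
        simp only [ENNReal.tsum_sigma']
        exact (ENNReal.tendsto_sum_nat_add _ hsum).liminf_eq

open Classical in
noncomputable def patch {ι A : Type*} (u : ι → A) (S : Finset ι) (w : S → A) : ι → A :=
  fun i => if h : i ∈ S then w ⟨i, h⟩ else u i

theorem patch_filter_ne {ι A : Type*} [Fintype ι] [DecidableEq A] (u v : ι → A) :
    patch u {i | u i ≠ v i} (fun i => v i) = v := by
  funext i
  unfold patch
  split_ifs with h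
  · rfl
  · simpa using h

/-- `(u, ⟨S, w⟩)` codes the word `patch u S w`, which differs from `u` at most on `S`. -/
abbrev PatchCode (ι A : Type*) (m : ℕ) : Type _ :=
  (ι → A) × Σ S : {S : Finset ι // S.card ≤ m}, (S.1 → A)

theorem card_patchCode_le {ι A : Type*} [Fintype ι] [DecidableEq ι] [Fintype A] [Nonempty A]
    (m : ℕ) :
    Fintype.card (PatchCode ι A m) ≤
      Fintype.card A ^ Fintype.card ι * (2 ^ Fintype.card ι * Fintype.card A ^ m) := by
  rw [Fintype.card_prod, Fintype.card_fun, Fintype.card_sigma]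
  gcongr
  calc ∑ S : {S : Finset ι // S.card ≤ m}, Fintype.card (S.1 → A)
      ≤ ∑ _S : {S : Finset ι // S.card ≤ m}, Fintype.card A ^ m :=
        Finset.sum_le_sum fun S _ => by
          rw [Fintype.card_fun, Fintype.card_coe]
          exact Nat.pow_le_pow_right Fintype.card_pos S.2
    _ ≤ 2 ^ Fintype.card ι * Fintype.card A ^ m := by
        rw [Finset.sum_const, Finset.card_univ, smul_eq_mul]
        gcongr
        simpa using Fintype.card_subtype_le fun S : Finset ι => S.card ≤ m

theorem finRotate_apply_ne {n : ℕ} (hn : 2 ≤ n) (a : Fin n) : finRotate n a ≠ a := by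
  obtain ⟨k, rfl⟩ : ∃ k, n = k + 2 := ⟨n - 2, by omega⟩
  simp

def factorialPattern (s : ℕ) : Set ℕ := {i | ∃ k, s ≤ k ∧ (2 * k + 1)! ≤ i ∧ i < (2 * k + 2)!}

theorem factorial_le_of_mem_factorialPattern {s i : ℕ} (h : i ∈ factorialPattern s) :
    (2 * s + 1)! ≤ i := by
  obtain ⟨k, hsk, hki, -⟩ := h
  exact (Nat.factorial_le (by omega)).trans hki

theorem factorial_mem_factorialPattern (s : ℕ) : (2 * s + 1)! ∈ factorialPattern s :=
  ⟨s, le_rfl, le_rfl, (Nat.factorial_lt (by omega)).mpr (by omega)⟩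

theorem factorialPattern_injective : Function.Injective factorialPattern := by
  have key : ∀ {s s'}, factorialPattern s = factorialPattern s' → s' ≤ s := fun h => by
    have := factorial_le_of_mem_factorialPattern (h ▸ factorial_mem_factorialPattern _)
    by_contra! hlt
    exact this.not_gt ((Nat.factorial_lt (by omega)).mpr (by omega))
  exact fun s s' h => le_antisymm (key h.symm) (key h)

theorem notMem_factorialPattern {s k i : ℕ} (h₁ : (2 * k + 2)! ≤ i) (h₂ : i < (2 * k + 3)!) :
    i ∉ factorialPattern s := by
  rintro ⟨k', -, hk'i, hik'⟩
  rcases le_or_gt k' k with hk | hk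
  · exact ((Nat.factorial_le (by omega : 2 * k' + 2 ≤ 2 * k + 2)).trans h₁).not_gt hik'
  · exact ((Nat.factorial_le (by omega : 2 * k + 3 ≤ 2 * k' + 1)).trans hk'i).not_gt h₂

theorem frequently_gap_factorialPattern (s : ℕ) {ε : ℝ} (hε : 0 < ε) :
    ∃ᶠ n : ℕ in atTop, ∃ a : ℕ, (a + 1 : ℝ) ≤ ε * n ∧
      ∀ i, a ≤ i → i < n → i ∉ factorialPattern s := by
  have hk : Tendsto (fun k : ℕ => 2 * k + 3) atTop atTop :=
    tendsto_atTop_mono (fun k => (by omega : k ≤ 2 * k + 3)) tendsto_id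
  refine (factorial_tendsto_atTop.comp hk).frequently (Eventually.frequently ?_)
  obtain ⟨k₀, hk₀⟩ := exists_nat_ge (2 / ε)
  filter_upwards [eventually_ge_atTop k₀] with k hk
  refine ⟨(2 * k + 2)!, ?_, fun i h₁ h₂ => notMem_factorialPattern h₁ h₂⟩
  have hfac : ((2 * k + 3)! : ℝ) = (2 * k + 3) * (2 * k + 2)! := by
    rw [show 2 * k + 3 = 2 * k + 2 + 1 by ring, Nat.factorial_succ]; push_cast; ring
  have hpos : (1 : ℝ) ≤ (2 * k + 2)! := by exact_mod_cast Nat.factorial_pos _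
  have h2 : 2 ≤ ε * (2 * k + 3) := by
    rw [div_le_iff₀ hε] at hk₀
    nlinarith [(Nat.cast_le (α := ℝ)).mpr hk]
  simp only [Function.comp_apply, hfac]
  nlinarith

open Classical in
theorem frequently_dense_factorialPattern (s : ℕ) :
    ∃ᶠ n : ℕ in atTop, n ≤ 2 * #{i ∈ Finset.range n | i ∈ factorialPattern s} := by
  have hk : Tendsto (fun k : ℕ => 2 * k + 2) atTop atTop :=
    tendsto_atTop_mono (fun k => (by omega : k ≤ 2 * k + 2)) tendsto_id
  refine (factorial_tendsto_atTop.comp hk).frequently (Eventually.frequently ?_)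
  filter_upwards [eventually_ge_atTop s] with k hk
  have hsub : Finset.Ico (2 * k + 1)! (2 * k + 2)! ⊆
      {i ∈ Finset.range (2 * k + 2)! | i ∈ factorialPattern s} := fun i hi => by
    obtain ⟨h₁, h₂⟩ := Finset.mem_Ico.mp hi
    exact Finset.mem_filter.mpr ⟨Finset.mem_range.mpr h₂, k, hk, h₁, h₂⟩
  have hfac : 2 * (2 * k + 1)! ≤ (2 * k + 2)! := by
    rw [Nat.factorial_succ]; exact Nat.mul_le_mul_right _ (by omega)
  have := Finset.card_le_card hsub
  rw [Nat.card_Ico] at this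
  simp only [Function.comp_apply]
  omega

namespace SymbSp

variable {K : ℕ}

theorem dist_le_inv_pow_of_agree {x y : SymbSp K} {n : ℕ} (h : ∀ i < n, x i = y i) :
    dist x y ≤ (K : ℝ)⁻¹ ^ n :=
  sdist_le_of_agree h

theorem edist_le_inv_pow_of_agree {x y : SymbSp K} {n : ℕ} (h : ∀ i < n, x i = y i) :
    edist x y ≤ (K : ℝ≥0∞)⁻¹ ^ n := by
  rw [edist_dist]
  refine (ENNReal.ofReal_le_ofReal (dist_le_inv_pow_of_agree h)).trans_eq ?_
  rw [ENNReal.ofReal_pow (by positivity), ENNReal.ofReal_inv_of_pos, ENNReal.ofReal_natCast]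
  exact_mod_cast Fin.pos (x 0)

theorem dist_le_one (x y : SymbSp K) : dist x y ≤ 1 := by
  simpa using dist_le_inv_pow_of_agree (x := x) (y := y) (n := 0) (by simp)

open Classical in
theorem dist_eq_one_of_apply_zero_ne {x y : SymbSp K} (h : x 0 ≠ y 0) : dist x y = 1 := by
  have hxy : x ≠ y := fun he => h (congrFun he 0)
  rw [show dist x y = sdist x y from rfl, sdist_eq hxy, (Nat.find_eq_zero _).mpr h, pow_zero]

open Classical in
theorem dist_eq_of_forall_eq_iff {x y x' y' : SymbSp K} (h : ∀ i, x i = y i ↔ x' i = y' i) :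
    dist x y = dist x' y' := by
  change sdist x y = sdist x' y'
  by_cases hxy : x = y
  · have hxy' : x' = y' := funext fun i => (h i).mp (congrFun hxy i)
    rw [hxy, hxy', sdist_self, sdist_self]
  · have hxy' : x' ≠ y' := fun he => hxy (funext fun i => (h i).mpr (congrFun he i))
    rw [sdist_eq hxy, sdist_eq hxy']
    congr 1
    exact le_antisymm (Nat.find_mono fun i => mt (h i).mp) (Nat.find_mono fun i => mt (h i).mpr)

theorem iterate_shift_apply (x : SymbSp K) (i j : ℕ) : (shift K)^[i] x j = x (j + i) := by
  induction i generalizing x with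
  | zero => rfl
  | succ i ih => rw [Function.iterate_succ_apply, ih]; rfl

theorem dist_iterate_shift_eq_one {x y : SymbSp K} {i : ℕ} (h : x i ≠ y i) :
    dist ((shift K)^[i] x) ((shift K)^[i] y) = 1 :=
  dist_eq_one_of_apply_zero_ne (by simpa [iterate_shift_apply] using h)

theorem dist_iterate_shift_le {x y : SymbSp K} {i t : ℕ}
    (h : ∀ j, i ≤ j → j < i + t → x j = y j) :
    dist ((shift K)^[i] x) ((shift K)^[i] y) ≤ (K : ℝ)⁻¹ ^ t :=
  dist_le_inv_pow_of_agree fun j hj => by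
    simpa [iterate_shift_apply] using h (j + i) (by omega) (by omega)

open Classical in
theorem lipschitzWith_ofDigits : LipschitzWith 1 (fun x : SymbSp K => Real.ofDigits x) := by
  refine LipschitzWith.of_dist_le_mul fun x y => ?_
  rw [NNReal.coe_one, one_mul]
  by_cases hxy : x = y
  · simp [hxy]
  · rw [Real.dist_eq, show dist x y = sdist x y from rfl, sdist_eq hxy, inv_pow]
    exact Real.abs_ofDigits_sub_ofDigits_le fun i hi => eq_of_lt_find hxy hi

theorem one_le_hausdorffMeasure_univ (hK : 2 ≤ K) : 1 ≤ μH[1] (univ : Set (SymbSp K)) :=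
  calc (1 : ℝ≥0∞) = μH[1] (Icc (0 : ℝ) 1) := by
        rw [hausdorffMeasure_real, Real.volume_Icc]; norm_num
    _ ≤ μH[1] ((fun x : SymbSp K => Real.ofDigits x) '' (univ : Set (SymbSp K))) :=
        measure_mono (Real.ofDigits_SurjOn (by omega))
    _ ≤ μH[1] (univ : Set (SymbSp K)) := by
        simpa using lipschitzWith_ofDigits.hausdorffMeasure_image_le zero_le_one univ

noncomputable def avgDist (x y : SymbSp K) (n : ℕ) : ℝ :=
  (∑ i ∈ Finset.range n, dist ((shift K)^[i] x) ((shift K)^[i] y)) / n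

theorem avgDist_nonneg (x y : SymbSp K) (n : ℕ) : 0 ≤ avgDist x y n :=
  div_nonneg (Finset.sum_nonneg fun _ _ => dist_nonneg) n.cast_nonneg

theorem avgDist_le_one (x y : SymbSp K) (n : ℕ) : avgDist x y n ≤ 1 := by
  refine div_le_one_of_le₀ ?_ n.cast_nonneg
  simpa using Finset.sum_le_card_nsmul (Finset.range n) _ 1 fun i _ => dist_le_one _ _

theorem isBoundedUnder_le_avgDist (x y : SymbSp K) :
    IsBoundedUnder (· ≤ ·) atTop (avgDist x y) :=
  isBoundedUnder_of ⟨1, avgDist_le_one x y⟩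

theorem isBoundedUnder_ge_avgDist (x y : SymbSp K) :
    IsBoundedUnder (· ≥ ·) atTop (avgDist x y) :=
  isBoundedUnder_of ⟨0, avgDist_nonneg x y⟩

open Classical in
theorem card_filter_ne_le_sum_dist (x y : SymbSp K) (n : ℕ) :
    (#{i ∈ Finset.range n | x i ≠ y i} : ℝ) ≤
      ∑ i ∈ Finset.range n, dist ((shift K)^[i] x) ((shift K)^[i] y) := by
  rw [Finset.card_filter, Nat.cast_sum]
  refine Finset.sum_le_sum fun i _ => ?_
  split_ifs with h
  · exact (dist_iterate_shift_eq_one h).ge.trans' (by simp)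
  · simp

theorem sum_dist_iterate_shift_le (hK : 2 ≤ K) {x y : SymbSp K} {a n : ℕ}
    (h : ∀ i, a ≤ i → i < n → x i = y i) :
    ∑ i ∈ Finset.range n, dist ((shift K)^[i] x) ((shift K)^[i] y) ≤ a + 1 := by
  have hterm : ∀ i ∈ Finset.range n, dist ((shift K)^[i] x) ((shift K)^[i] y) ≤
      (if i < a then 1 else 0) + (2 : ℝ)⁻¹ ^ (n - i) := by
    intro i hi
    split_ifs with hia
    · exact (dist_le_one _ _).trans (le_add_of_nonneg_right (by positivity))
    · have hin := Finset.mem_range.mp hi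
      refine (dist_iterate_shift_le (t := n - i) fun j _ _ => h j (by omega) (by omega)).trans ?_
      rw [zero_add]
      exact pow_le_pow_left₀ (by positivity) (inv_anti₀ two_pos (by exact_mod_cast hK)) _
  refine (Finset.sum_le_sum hterm).trans ?_
  rw [Finset.sum_add_distrib, Finset.sum_boole]
  gcongr
  · exact_mod_cast (Finset.card_le_card fun i => by simp).trans (Finset.card_range a).le
  · exact sum_range_inv_two_pow_sub_le_one n

theorem liminf_avgDist_eq_zero (hK : 2 ≤ K) {x y : SymbSp K}
    (h : ∀ ε > 0, ∃ᶠ n : ℕ in atTop,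
      ∃ a : ℕ, (a + 1 : ℝ) ≤ ε * n ∧ ∀ i, a ≤ i → i < n → x i = y i) :
    liminf (avgDist x y) atTop = 0 := by
  refine le_antisymm (le_of_forall_pos_le_add fun ε hε => ?_)
    (le_liminf_of_le (isBoundedUnder_le_avgDist x y).isCoboundedUnder_ge
      (Eventually.of_forall (avgDist_nonneg x y)))
  rw [zero_add]
  refine liminf_le_of_frequently_le ((h ε hε).mono fun n ⟨a, hεn, hgap⟩ => ?_)
    (isBoundedUnder_ge_avgDist x y)
  rcases n.eq_zero_or_pos with rfl | hn
  · simp [avgDist, hε.le]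
  · rw [avgDist, div_le_iff₀ (by exact_mod_cast hn)]
    exact (sum_dist_iterate_shift_le hK hgap).trans hεn

open Classical in
theorem limsup_avgDist_pos {x y : SymbSp K}
    (h : ∃ᶠ n in atTop, n ≤ 2 * #{i ∈ Finset.range n | x i ≠ y i}) :
    0 < limsup (avgDist x y) atTop := by
  have hhalf : ∃ᶠ n in atTop, (2⁻¹ : ℝ) ≤ avgDist x y n := by
    refine (h.and_eventually (eventually_gt_atTop 0)).mono fun n ⟨hdense, hn⟩ => ?_
    rw [avgDist, le_div_iff₀ (by exact_mod_cast hn)]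
    have : (n : ℝ) ≤ 2 * #{i ∈ Finset.range n | x i ≠ y i} := by exact_mod_cast hdense
    linarith [card_filter_ne_le_sum_dist x y n]
  exact (by norm_num : (0 : ℝ) < 2⁻¹).trans_le
    (le_limsup_of_frequently_le hhalf (isBoundedUnder_le_avgDist x y))

open Classical in
noncomputable def flipOn (π : Equiv.Perm (Fin K)) (D : Set ℕ) (z : SymbSp K) : SymbSp K :=
  fun i => if i ∈ D then π (z i) else z i

theorem apply_ne_flipOn_iff {π : Equiv.Perm (Fin K)} (hπ : ∀ a, π a ≠ a) {D : Set ℕ}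
    {z : SymbSp K} {i : ℕ} : z i ≠ flipOn π D z i ↔ i ∈ D := by
  unfold flipOn
  split_ifs with h <;> simp [h, (hπ _).symm]

theorem isometry_flipOn (π : Equiv.Perm (Fin K)) (D : Set ℕ) : Isometry (flipOn π D) :=
  Isometry.of_dist_eq fun z z' => dist_eq_of_forall_eq_iff fun i => by
    unfold flipOn
    split_ifs <;> simp

theorem eq_of_flipOn_eq {π : Equiv.Perm (Fin K)} (hπ : ∀ a, π a ≠ a) {D D' : Set ℕ}
    {z : SymbSp K} (h : flipOn π D z = flipOn π D' z) : D = D' :=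
  Set.ext fun i => by rw [← apply_ne_flipOn_iff hπ, h, apply_ne_flipOn_iff hπ]

theorem one_le_hausdorffMeasure_graph (hK : 2 ≤ K) (f : SymbSp K → SymbSp K) :
    1 ≤ μH[1] {p : SymbSp K × SymbSp K | p.2 = f p.1} := by
  have himage : Prod.fst '' {p : SymbSp K × SymbSp K | p.2 = f p.1} = univ :=
    eq_univ_of_forall fun z => ⟨(z, f z), rfl, rfl⟩
  calc 1 ≤ μH[1] (univ : Set (SymbSp K)) := one_le_hausdorffMeasure_univ hK
    _ ≤ μH[1] {p : SymbSp K × SymbSp K | p.2 = f p.1} := by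
        simpa [himage] using (LipschitzWith.prod_fst (α := SymbSp K) (β := SymbSp K))
          |>.hausdorffMeasure_image_le zero_le_one {p : SymbSp K × SymbSp K | p.2 = f p.1}

open Classical in
theorem mk_flipOn_mem_MLYset (hK : 2 ≤ K) {π : Equiv.Perm (Fin K)} (hπ : ∀ a, π a ≠ a)
    (s : ℕ) (z : SymbSp K) : (z, flipOn π (factorialPattern s) z) ∈ MLYset K := by
  refine ⟨liminf_avgDist_eq_zero hK fun ε hε => ?_, limsup_avgDist_pos ?_⟩
  · refine (frequently_gap_factorialPattern s hε).mono fun n ⟨a, han, hgap⟩ => ⟨a, han, ?_⟩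
    exact fun i hai hin => not_not.mp fun h => hgap i hai hin ((apply_ne_flipOn_iff hπ).mp h)
  · simpa only [apply_ne_flipOn_iff hπ] using frequently_dense_factorialPattern s

theorem hausdorffMeasure_MLYset_eq_top (hK : 2 ≤ K) : μH[1] (MLYset K) = ⊤ := by
  set G : ℕ → Set (SymbSp K × SymbSp K) :=
    fun s => {p | p.2 = flipOn (finRotate K) (factorialPattern s) p.1}
  have hsub : ⋃ s, G s ⊆ MLYset K := iUnion_subset fun s p (hp : p.2 = _) => by
    rw [← Prod.mk.eta (p := p), hp]
    exact mk_flipOn_mem_MLYset hK (finRotate_apply_ne hK) s p.1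
  have hdisj : Pairwise (Function.onFun Disjoint G) := by
    refine fun s s' hss' => Set.disjoint_left.mpr fun p hp hp' => hss' ?_
    exact factorialPattern_injective (eq_of_flipOn_eq (finRotate_apply_ne hK)
      ((show p.2 = _ from hp).symm.trans (show p.2 = _ from hp')))
  have hmeas : ∀ s, MeasurableSet (G s) := fun s => IsClosed.measurableSet <|
    isClosed_eq continuous_snd ((isometry_flipOn _ _).continuous.comp continuous_fst)
  refine top_le_iff.mp ?_
  calc ⊤ = ∑' _ : ℕ, (1 : ℝ≥0∞) := (ENNReal.tsum_const_eq_top_of_ne_zero one_ne_zero).symm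
    _ ≤ ∑' s, μH[1] (G s) := ENNReal.tsum_le_tsum fun s => one_le_hausdorffMeasure_graph hK _
    _ = μH[1] (⋃ s, G s) := (measure_iUnion hdisj hmeas).symm
    _ ≤ μH[1] (MLYset K) := measure_mono hsub

def blockWord (L j : ℕ) (x : SymbSp K) : Fin j → Fin L → Fin K := fun b l => x (L * b + l)

theorem apply_eq_of_blockWord_eq {L j : ℕ} {x y : SymbSp K}
    (h : blockWord L j x = blockWord L j y) {i : ℕ} (hi : i < L * j) : x i = y i := by
  have hL : 0 < L := Nat.pos_of_ne_zero fun hL => by simp [hL] at hi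
  have hb : i / L < j := (Nat.div_lt_iff_lt_mul hL).mpr (by rwa [mul_comm])
  simpa [blockWord, Nat.div_add_mod] using
    congrFun (congrFun h ⟨i / L, hb⟩) ⟨i % L, Nat.mod_lt i hL⟩

open Classical in
theorem hammingDist_blockWord_le (L j : ℕ) (x y : SymbSp K) :
    hammingDist (blockWord L j x) (blockWord L j y) ≤ #{i ∈ Finset.range (L * j) | x i ≠ y i} := by
  calc hammingDist (blockWord L j x) (blockWord L j y)
      = #((Finset.univ.filter fun b => blockWord L j x b ≠ blockWord L j y b).map
          Fin.valEmbedding) := (Finset.card_map _).symm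
    _ ≤ #(Finset.image (· / L) {i ∈ Finset.range (L * j) | x i ≠ y i}) := by
        refine Finset.card_le_card fun _ hb => ?_
        obtain ⟨b, hbad, rfl⟩ := Finset.mem_map.mp hb
        obtain ⟨l, hl⟩ := Function.ne_iff.mp (Finset.mem_filter.mp hbad).2
        have hL : 0 < L := l.pos
        refine Finset.mem_image.mpr ⟨L * b + l, Finset.mem_filter.mpr ⟨?_, hl⟩, ?_⟩
        · rw [Finset.mem_range]
          nlinarith [b.isLt, l.isLt]
        · simp [Nat.mul_add_div hL, Nat.div_eq_of_lt l.isLt]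
    _ ≤ #{i ∈ Finset.range (L * j) | x i ≠ y i} := Finset.card_image_le

def blockCylinder (L j : ℕ) (u v : Fin j → Fin L → Fin K) : Set (SymbSp K × SymbSp K) :=
  {p | blockWord L j p.1 = u ∧ blockWord L j p.2 = v}

theorem ediam_blockCylinder_le (L j : ℕ) (u v : Fin j → Fin L → Fin K) :
    ediam (blockCylinder L j u v) ≤ (K : ℝ≥0∞)⁻¹ ^ (L * j) :=
  ediam_le fun _ hp _ hq => by
    rw [Prod.edist_eq]
    exact max_le
      (edist_le_inv_pow_of_agree fun i => apply_eq_of_blockWord_eq (hp.1.trans hq.1.symm))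
      (edist_le_inv_pow_of_agree fun i => apply_eq_of_blockWord_eq (hp.2.trans hq.2.symm))

def patchCylinder (L j m : ℕ) (c : PatchCode (Fin j) (Fin L → Fin K) m) :
    Set (SymbSp K × SymbSp K) :=
  blockCylinder L j c.1 (patch c.1 c.2.1 c.2.2)

theorem exists_mem_patchCylinder {L j m : ℕ} {p : SymbSp K × SymbSp K}
    (h : hammingDist (blockWord L j p.1) (blockWord L j p.2) ≤ m) :
    ∃ c, p ∈ patchCylinder (K := K) L j m c :=
  ⟨(blockWord L j p.1, ⟨⟨_, h⟩, fun b => blockWord L j p.2 b⟩), rfl, (patch_filter_ne _ _).symm⟩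

open Classical in
theorem frequently_hammingDist_blockWord_le {x y : SymbSp K}
    (h : liminf (avgDist x y) atTop = 0) {L M : ℕ} (hL : 0 < L) (hM : 0 < M) :
    ∃ᶠ j in atTop, hammingDist (blockWord L j x) (blockWord L j y) ≤ j / M := by
  set ε : ℝ := (2 * L * M)⁻¹
  have hsmall : ∃ᶠ n in atTop, avgDist x y n < ε :=
    frequently_lt_of_liminf_lt (isBoundedUnder_le_avgDist x y).isCoboundedUnder_ge
      (h ▸ by positivity)
  rw [frequently_atTop] at hsmall ⊢
  intro N
  obtain ⟨n, hn, hlt⟩ := hsmall (L * (N + 1))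
  set j := n / L
  have hj : N + 1 ≤ j := (Nat.le_div_iff_mul_le hL).mpr (by linarith)
  have hn2 : n ≤ 2 * L * j := by
    have h₁ : n < L * (j + 1) := Nat.lt_mul_div_succ n hL
    have h₂ : L * 1 ≤ L * j := Nat.mul_le_mul_left L (by omega)
    linarith
  have hham : (hammingDist (blockWord L j x) (blockWord L j y) : ℝ) < ε * n :=
    calc (hammingDist (blockWord L j x) (blockWord L j y) : ℝ)
        ≤ #{i ∈ Finset.range n | x i ≠ y i} := by
          exact_mod_cast (hammingDist_blockWord_le L j x y).trans (Finset.card_le_card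
            (Finset.filter_subset_filter _ (Finset.range_subset_range.mpr (Nat.mul_div_le n L))))
      _ ≤ ∑ i ∈ Finset.range n, dist ((shift K)^[i] x) ((shift K)^[i] y) :=
          card_filter_ne_le_sum_dist x y n
      _ < ε * n := by rwa [avgDist, div_lt_iff₀ (by exact_mod_cast (by nlinarith : 0 < n))] at hlt
  refine ⟨j, by omega, (Nat.le_div_iff_mul_le hM).mpr (le_of_lt ?_)⟩
  have : (hammingDist (blockWord L j x) (blockWord L j y) * M : ℝ) < j :=
    calc _ < ε * n * M := by gcongr
      _ ≤ ε * (2 * L * j) * M := by gcongr; exact_mod_cast hn2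
      _ = j := by simp only [ε]; field_simp
  exact_mod_cast this

theorem card_patchCode_le_mul_four_pow (hK : 2 ≤ K) (L j : ℕ) :
    Fintype.card (PatchCode (Fin j) (Fin L → Fin K) (j / (K * L))) ≤ (K ^ L) ^ j * 4 ^ j := by
  have : Nonempty (Fin K) := ⟨⟨0, by omega⟩⟩
  have hsmall : (K ^ L) ^ (j / (K * L)) ≤ 2 ^ j :=
    calc (K ^ L) ^ (j / (K * L)) ≤ ((2 ^ K) ^ L) ^ (j / (K * L)) := by
          gcongr; exact Nat.lt_two_pow_self.le
      _ = 2 ^ (j / (K * L) * (K * L)) := by ring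
      _ ≤ 2 ^ j := Nat.pow_le_pow_right two_pos (Nat.div_mul_le_self j _)
  refine (card_patchCode_le _).trans ?_
  simp only [Fintype.card_fun, Fintype.card_fin]
  calc (K ^ L) ^ j * (2 ^ j * (K ^ L) ^ (j / (K * L))) ≤ (K ^ L) ^ j * (2 ^ j * 2 ^ j) := by
        gcongr
    _ = (K ^ L) ^ j * 4 ^ j := by rw [← mul_pow]; norm_num

theorem card_patchCode_mul_rpow_le (hK : 2 ≤ K) (L j : ℕ) (d : ℝ) :
    (Fintype.card (PatchCode (Fin j) (Fin L → Fin K) (j / (K * L))) : ℝ≥0∞) *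
        (((K : ℝ≥0∞)⁻¹ ^ L) ^ j) ^ d ≤ (4 * ((K : ℝ≥0∞)⁻¹ ^ L) ^ (d - 1)) ^ j := by
  set a : ℝ≥0∞ := ((K : ℝ≥0∞)⁻¹ ^ L) ^ j
  have hK0 : (K : ℝ≥0∞) ≠ 0 := by exact_mod_cast (by omega : K ≠ 0)
  have ha0 : a ≠ 0 := by simp [a]
  have hatop : a ≠ ⊤ := by simp [a, hK0]
  have hcard : (Fintype.card (PatchCode (Fin j) (Fin L → Fin K) (j / (K * L))) : ℝ≥0∞) ≤
      a⁻¹ * 4 ^ j := by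
    simp only [a, ENNReal.inv_pow, inv_inv]
    exact_mod_cast card_patchCode_le_mul_four_pow hK L j
  calc _ ≤ a⁻¹ * 4 ^ j * a ^ d := by gcongr
    _ = 4 ^ j * a ^ (d - 1) := by
        rw [ENNReal.rpow_sub _ _ ha0 hatop, ENNReal.rpow_one, div_eq_mul_inv]; ring
    _ = (4 * ((K : ℝ≥0∞)⁻¹ ^ L) ^ (d - 1)) ^ j := by
        rw [mul_pow, ← ENNReal.rpow_mul_natCast, mul_comm (d - 1), ENNReal.rpow_natCast_mul]

theorem hausdorffMeasure_MLYset_eq_zero (hK : 2 ≤ K) {d : ℝ} (hd : 1 < d) :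
    μH[d] (MLYset K) = 0 := by
  have hKinv : (K : ℝ≥0∞)⁻¹ < 1 := ENNReal.inv_lt_one.mpr (by exact_mod_cast (by omega : 1 < K))
  have hsmall : Tendsto (fun L : ℕ => 4 * ((K : ℝ≥0∞)⁻¹ ^ L) ^ (d - 1)) atTop (𝓝 0) := by
    have := ((ENNReal.continuous_rpow_const (y := d - 1)).tendsto 0).comp
      (ENNReal.tendsto_pow_atTop_nhds_zero_of_lt_one hKinv)
    rw [ENNReal.zero_rpow_of_pos (by linarith)] at this
    simpa using ENNReal.Tendsto.const_mul this (Or.inr ENNReal.ofNat_ne_top)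
  obtain ⟨L, hθ, hL⟩ := ((hsmall.eventually (gt_mem_nhds (by norm_num : (0 : ℝ≥0∞) < 2⁻¹))).and
    (eventually_ge_atTop 1)).exists
  set ρ : ℝ≥0∞ := (K : ℝ≥0∞)⁻¹ ^ L
  have hρ : ρ < 1 := pow_lt_one₀ zero_le hKinv (by omega)
  have hdiam : ∀ j c, ediam (patchCylinder L j (j / (K * L)) c) ≤ ρ ^ j := fun j c => by
    rw [← pow_mul]
    exact ediam_blockCylinder_le L j _ _
  refine hausdorffMeasure_eq_zero_of_frequently_mem (fun j => patchCylinder L j (j / (K * L)))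
    (ENNReal.tendsto_pow_atTop_nhds_zero_of_lt_one hρ)
    (fun _ _ => pow_le_pow_right_of_le_one' hρ.le) hdiam ?_ ?_
  · refine ne_top_of_le_ne_top (tsum_geometric_lt_top.mpr (by norm_num : (2⁻¹ : ℝ≥0∞) < 1)).ne
      (ENNReal.tsum_le_tsum fun j => ?_)
    rw [tsum_fintype]
    calc ∑ c, ediam (patchCylinder L j (j / (K * L)) c) ^ d
        ≤ ∑ _c : PatchCode (Fin j) (Fin L → Fin K) (j / (K * L)), (ρ ^ j) ^ d :=
          Finset.sum_le_sum fun c _ => ENNReal.rpow_le_rpow (hdiam j c) (by linarith)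
      _ = Fintype.card (PatchCode (Fin j) (Fin L → Fin K) (j / (K * L))) * (ρ ^ j) ^ d := by
          rw [Finset.sum_const, Finset.card_univ, nsmul_eq_mul]
      _ ≤ (4 * ρ ^ (d - 1)) ^ j := card_patchCode_mul_rpow_le hK L j d
      _ ≤ 2⁻¹ ^ j := by gcongr
  · exact fun p hp => (frequently_hammingDist_blockWord_le hp.1 hL (by positivity)).mono
      fun j hj => exists_mem_patchCylinder hj

end SymbSp

/-- For `K ≥ 2`, the set of mean Li–Yorke pairs of `σ_K` has Hausdorff
dimension `1` and its `1`-dimensional Hausdorff measure equals `+∞`. -/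
theorem statement_3 (K : ℕ) (hK : 2 ≤ K) :
    dimH (MLYset K) = 1 ∧ μH[1] (MLYset K) = ⊤ := by
  have htop := SymbSp.hausdorffMeasure_MLYset_eq_top hK
  refine ⟨le_antisymm (dimH_le fun d hd => ?_) ?_, htop⟩
  · by_contra! h
    rw [SymbSp.hausdorffMeasure_MLYset_eq_zero hK (by exact_mod_cast h)] at hd
    exact ENNReal.zero_ne_top hd
  · simpa using le_dimH_of_hausdorffMeasure_eq_top (d := 1) (by simpa using htop)
end

section
/- Let K ≥ 2, let (n_i)_{i≥0} be positive integers, and for each i ≥ 0 let A_i be a nonempty subset of {0,…,K−1}^{n_i} with a_i = #A_i. Let X ⊆ Σ_K be the set of all infinite sequences obtained as concatenations ω_0ω_1ω_2⋯ with ω_i ∈ A_i for all i. Then dim_H X ≥ liminf_{j→∞} (Σ_{0≤i<j} ln a_i)/(Σ_{0≤i<j+1} n_i · ln K). -/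
open Filter Set MeasureTheory Topology TopologicalSpace

/-!
Mass distribution principle. Concatenating independent uniformly distributed words `ω_i ∈ A_i`
gives a probability measure on `X` that assigns mass at most `(a_0 ⋯ a_{j-1})⁻¹` to every
cylinder of length `n_0 + ⋯ + n_{j-1}`. For `d` below the liminf this is eventually at most
`K^{-d (n_0 + ⋯ + n_j)}`, so a cylinder of length `m` has mass at most `K^{-d (m+1)}`; since a
set of diameter `D ≤ K^{-m}` lies in a cylinder of length `m`, every small set has mass at most
`D ^ d`, and hence `μH[d] X ≥ 1`.
-/

open ProbabilityTheory
open scoped ENNReal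

theorem le_rpow_of_le_rpow_pow_succ {r a D : ℝ≥0∞} {d : ℝ} (hr : r < 1) (hd : 0 < d) {m₀ : ℕ}
    (hD : D ≤ r ^ m₀) (h : ∀ m, m₀ ≤ m → D ≤ r ^ m → a ≤ (r ^ (m + 1)) ^ d) : a ≤ D ^ d := by
  by_contra! hlt
  -- `a > D ^ d` propagates `D ≤ r ^ m` to every scale `m ≥ m₀`, which then forces `a ≤ 0`
  have hD_le : ∀ m, m₀ ≤ m → D ≤ r ^ m := by
    intro m hm
    induction m, hm using Nat.le_induction with
    | base => exact hD
    | succ m hm ih =>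
      by_contra! hgt
      exact ((h m hm ih).trans (ENNReal.rpow_le_rpow hgt.le hd.le)).not_gt hlt
  have hlim : Tendsto (fun m : ℕ => (r ^ (m + 1)) ^ d) atTop (𝓝 0) := by
    have hpow := (ENNReal.tendsto_pow_atTop_nhds_zero_of_lt_one hr).comp (tendsto_add_atTop_nat 1)
    simpa [Function.comp_def, ENNReal.zero_rpow_of_pos hd] using
      (ENNReal.continuous_rpow_const (y := d) |>.tendsto 0).comp hpow
  have ha : a ≤ 0 := ge_of_tendsto hlim (eventually_atTop.2 ⟨m₀, fun m hm => h m hm (hD_le m hm)⟩)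
  exact ENNReal.not_lt_zero (hlt.trans_le ha)

namespace SymbSp

variable {K : ℕ}

def cylinder (x : SymbSp K) (m : ℕ) : Set (SymbSp K) := {y | ∀ i < m, y i = x i}

theorem cylinder_anti (x : SymbSp K) : Antitone (cylinder x) :=
  fun _ _ hm _ hy i hi => hy i (hi.trans_le hm)

theorem eq_of_edist_le (hK : 2 ≤ K) {x y : SymbSp K} {m : ℕ}
    (h : edist x y ≤ (K : ℝ≥0∞)⁻¹ ^ m) {i : ℕ} (hi : i < m) : x i = y i := by
  classical
  by_cases hxy : x = y
  · rw [hxy]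
  have hK1 : (1 : ℝ) < K := by exact_mod_cast hK
  rw [edist_dist, ← ENNReal.ofReal_natCast, ← ENNReal.ofReal_inv_of_pos (by positivity),
    ← ENNReal.ofReal_pow (by positivity), ENNReal.ofReal_le_ofReal_iff (by positivity)] at h
  change sdist x y ≤ _ at h
  rw [sdist_eq hxy, pow_le_pow_iff_right_of_lt_one₀ (by positivity)
    (inv_lt_one_of_one_lt₀ hK1)] at h
  exact eq_of_lt_find hxy (hi.trans_le h)

theorem subset_cylinder_of_ediam_le (hK : 2 ≤ K) {s : Set (SymbSp K)} {x : SymbSp K} (hx : x ∈ s)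
    {m : ℕ} (hs : Metric.ediam s ≤ (K : ℝ≥0∞)⁻¹ ^ m) : s ⊆ cylinder x m :=
  fun _ hy _ hi => eq_of_edist_le hK ((Metric.edist_le_ediam_of_mem hy hx).trans hs) hi

theorem isOpen_cylinder (hK : 2 ≤ K) (x : SymbSp K) (m : ℕ) : IsOpen (cylinder x m) := by
  refine EMetric.isOpen_iff.2 fun y hy => ⟨(K : ℝ≥0∞)⁻¹ ^ m,
    ENNReal.pow_pos (ENNReal.inv_pos.2 (ENNReal.natCast_ne_top K)) m, fun z hz i hi => ?_⟩
  exact (eq_of_edist_le hK (Metric.mem_eball.1 hz).le hi).trans (hy i hi)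

theorem exists_cylinder_subset (hK : 2 ≤ K) {U : Set (SymbSp K)} (hU : IsOpen U) {x : SymbSp K}
    (hx : x ∈ U) : ∃ m, cylinder x m ⊆ U := by
  obtain ⟨ε, hε, hball⟩ := Metric.isOpen_iff.1 hU x hx
  obtain ⟨m, hm⟩ := exists_pow_lt_of_lt_one hε
    (inv_lt_one_of_one_lt₀ (by exact_mod_cast hK : (1 : ℝ) < K))
  exact ⟨m, fun y hy => hball ((sdist_le_of_agree hy).trans_lt hm)⟩

theorem measurable_of_forall_apply (hK : 2 ≤ K) {α : Type*} [MeasurableSpace α]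
    {f : α → SymbSp K} (hf : ∀ k, Measurable fun a => f a k) : Measurable f := by
  refine measurable_of_isOpen fun U hU => ?_
  -- whether `cylinder (f a) m ⊆ U` only depends on the first `m` coordinates of `f a`
  have hpre : f ⁻¹' U = ⋃ m : ℕ, (fun a (i : Fin m) => f a i : α → Fin m → Fin K) ⁻¹'
      {w | ∀ y : SymbSp K, (∀ i : Fin m, y i = w i) → y ∈ U} := by
    ext a
    simp only [mem_preimage, mem_iUnion, mem_ofPred_eq]
    constructor
    · intro ha
      obtain ⟨m, hm⟩ := exists_cylinder_subset hK hU ha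
      exact ⟨m, fun y hy => hm fun i hi => hy ⟨i, hi⟩⟩
    · rintro ⟨m, hm⟩
      exact hm _ fun _ => rfl
  rw [hpre]
  exact .iUnion fun m =>
    measurable_pi_lambda (fun a (i : Fin m) => f a i) (fun i => hf i) .of_discrete

theorem le_hausdorffMeasure_of_cylinder_le (hK : 2 ≤ K) (μ : Measure (SymbSp K)) {d : ℝ}
    (hd : 0 < d) (m₀ : ℕ)
    (h : ∀ x m, m₀ ≤ m → μ (cylinder x m) ≤ ((K : ℝ≥0∞)⁻¹ ^ (m + 1)) ^ d) : μ ≤ μH[d] := by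
  have hr : (K : ℝ≥0∞)⁻¹ < 1 := ENNReal.inv_lt_one.2 (by exact_mod_cast hK)
  refine Measure.le_hausdorffMeasure d μ _
    (ENNReal.pow_pos (ENNReal.inv_pos.2 (ENNReal.natCast_ne_top K)) m₀) fun s hs => ?_
  rcases s.eq_empty_or_nonempty with rfl | ⟨x, hx⟩
  · simp
  exact le_rpow_of_le_rpow_pow_succ hr hd hs fun m hm hsm =>
    (measure_mono (subset_cylinder_of_ediam_le hK hx hsm)).trans (h x m hm)

end SymbSp

section Blocks

variable {n : ℕ → ℕ}

def blockStart (n : ℕ → ℕ) (i : ℕ) : ℕ := ∑ l ∈ Finset.range i, n l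

theorem blockStart_succ (i : ℕ) : blockStart n (i + 1) = blockStart n i + n i :=
  Finset.sum_range_succ _ _

theorem blockStart_mono : Monotone (blockStart n) :=
  fun _ _ h => Finset.sum_le_sum_of_subset (Finset.range_subset_range.2 h)

theorem le_blockStart (hn : ∀ i, 0 < n i) (i : ℕ) : i ≤ blockStart n i := by
  induction i with
  | zero => exact Nat.zero_le _
  | succ i ih => rw [blockStart_succ]; have := hn i; omega

theorem exists_lt_blockStart_succ (hn : ∀ i, 0 < n i) (k : ℕ) : ∃ i, k < blockStart n (i + 1) :=
  ⟨k, le_blockStart hn (k + 1)⟩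

def blockIndex (hn : ∀ i, 0 < n i) (k : ℕ) : ℕ := Nat.find (exists_lt_blockStart_succ hn k)

variable (hn : ∀ i, 0 < n i)

theorem lt_blockStart_blockIndex_succ (k : ℕ) : k < blockStart n (blockIndex hn k + 1) :=
  Nat.find_spec (exists_lt_blockStart_succ hn k)

theorem blockStart_blockIndex_le (k : ℕ) : blockStart n (blockIndex hn k) ≤ k := by
  rcases h : blockIndex hn k with _ | i
  · exact Nat.zero_le _
  · have hi : i < blockIndex hn k := by omega
    exact not_lt.1 (Nat.find_min (exists_lt_blockStart_succ hn k) hi)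

theorem blockIndex_eq {k i : ℕ} (h₁ : blockStart n i ≤ k) (h₂ : k < blockStart n (i + 1)) :
    blockIndex hn k = i :=
  (Nat.find_eq_iff _).2 ⟨h₂, fun _ hl => not_lt.2 ((blockStart_mono hl).trans h₁)⟩

theorem blockIndex_blockStart_add {i : ℕ} (j : Fin (n i)) :
    blockIndex hn (blockStart n i + j) = i :=
  blockIndex_eq hn (Nat.le_add_right _ _) (by rw [blockStart_succ]; omega)

theorem le_blockIndex {i k : ℕ} (h : blockStart n i ≤ k) : i ≤ blockIndex hn k := by
  by_contra! hlt
  exact (lt_blockStart_blockIndex_succ hn k).not_ge ((blockStart_mono hlt).trans h)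

end Blocks

namespace SymbSp

variable {K : ℕ} {n : ℕ → ℕ}

def block (n : ℕ → ℕ) (x : SymbSp K) (i : ℕ) : Fin (n i) → Fin K :=
  fun j => x (blockStart n i + j)

def concat (hn : ∀ i, 0 < n i) (ω : ∀ i, Fin (n i) → Fin K) : SymbSp K := fun k =>
  ω (blockIndex hn k) ⟨k - blockStart n (blockIndex hn k), by
    have := blockStart_blockIndex_le hn k
    have := lt_blockStart_blockIndex_succ hn k
    rw [blockStart_succ] at this
    omega⟩

variable (hn : ∀ i, 0 < n i)

theorem concat_apply_of_blockIndex_eq (ω : ∀ i, Fin (n i) → Fin K) {k i : ℕ}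
    (h : blockIndex hn k = i) (hk : k - blockStart n i < n i) :
    concat hn ω k = ω i ⟨k - blockStart n i, hk⟩ := by
  subst h
  rfl

@[simp]
theorem block_concat (ω : ∀ i, Fin (n i) → Fin K) (i : ℕ) : block n (concat hn ω) i = ω i := by
  funext j
  rw [block, concat_apply_of_blockIndex_eq hn ω (blockIndex_blockStart_add hn j) (by simp)]
  simp

theorem measurable_concat (hK : 2 ≤ K) : Measurable (concat (K := K) hn) :=
  measurable_of_forall_apply hK fun k => by unfold concat; fun_prop

theorem concat_preimage_cylinder_subset (x : SymbSp K) (j : ℕ) :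
    concat hn ⁻¹' cylinder x (blockStart n j) ⊆
      (Finset.range j : Set ℕ).pi fun i => {block n x i} := by
  intro ω hω i hi
  rw [mem_singleton_iff, ← block_concat hn ω i]
  funext q
  refine hω _ ?_
  have := blockStart_mono (n := n) (Finset.mem_range.1 hi : i < j)
  rw [blockStart_succ] at this
  omega

end SymbSp

theorem uniformOn_singleton_le {Ω : Type*} [MeasurableSpace Ω] [MeasurableSingletonClass Ω]
    {s : Set Ω} (hs : s.Finite) (ω : Ω) : uniformOn s {ω} ≤ (Nat.card s : ℝ≥0∞)⁻¹ := by
  rw [uniformOn, cond_apply hs.measurableSet, Measure.count_apply hs.measurableSet,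
    ← hs.cast_ncard_eq, Nat.card_coe_set_eq]
  calc _ ≤ ((s.ncard : ℕ∞) : ℝ≥0∞)⁻¹ * 1 := by
        gcongr
        exact (measure_mono inter_subset_right).trans (Measure.count_singleton ω).le
    _ = _ := by simp

namespace SymbSp

variable {K : ℕ} {n : ℕ → ℕ}

def concatSet (A : ∀ i, Set (Fin (n i) → Fin K)) : Set (SymbSp K) :=
  {x | ∀ i, block n x i ∈ A i}

noncomputable def concatMeasure (hn : ∀ i, 0 < n i) (A : ∀ i, Set (Fin (n i) → Fin K)) :
    Measure (SymbSp K) :=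
  (Measure.infinitePi fun i => uniformOn (A i)).map (concat hn)

noncomputable def blockRatio (K : ℕ) (n : ℕ → ℕ) (A : ∀ i, Set (Fin (n i) → Fin K)) (j : ℕ) : ℝ :=
  (∑ i ∈ Finset.range j, Real.log (Nat.card (A i))) /
    (∑ i ∈ Finset.range (j + 1), (n i : ℝ) * Real.log K)

variable {A : ∀ i, Set (Fin (n i) → Fin K)}

theorem concatMeasure_cylinder_le (hK : 2 ≤ K) (hn : ∀ i, 0 < n i) (hA : ∀ i, (A i).Nonempty)
    (x : SymbSp K) (j : ℕ) :
    concatMeasure hn A (cylinder x (blockStart n j)) ≤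
      ∏ i ∈ Finset.range j, (Nat.card (A i) : ℝ≥0∞)⁻¹ := by
  have := fun i => isProbabilityMeasure_uniformOn (toFinite (A i)) (hA i)
  rw [concatMeasure, Measure.map_apply (measurable_concat hn hK)
    (isOpen_cylinder hK x _).measurableSet]
  calc _ ≤ Measure.infinitePi (fun i => uniformOn (A i))
          ((Finset.range j : Set ℕ).pi fun i => {block n x i}) :=
        measure_mono (concat_preimage_cylinder_subset hn x j)
    _ = ∏ i ∈ Finset.range j, uniformOn (A i) {block n x i} :=
        Measure.infinitePi_pi _ fun _ _ => measurableSet_singleton _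
    _ ≤ _ := Finset.prod_le_prod' fun i _ => uniformOn_singleton_le (toFinite _) _

theorem concatMeasure_concatSet (hK : 2 ≤ K) (hn : ∀ i, 0 < n i) (hA : ∀ i, (A i).Nonempty) :
    concatMeasure hn A (concatSet A) = 1 := by
  have := fun i => isProbabilityMeasure_uniformOn (toFinite (A i)) (hA i)
  have : IsProbabilityMeasure (concatMeasure hn A) :=
    Measure.isProbabilityMeasure_map (measurable_concat hn hK).aemeasurable
  refine le_antisymm prob_le_one ?_
  calc 1 = ∏' i, uniformOn (A i) (A i) := by simp [uniformOn_self (toFinite _) (hA _)]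
    _ = Measure.infinitePi (fun i => uniformOn (A i)) (univ.pi A) :=
        (Measure.infinitePi_pi_univ _ fun _ => .of_discrete).symm
    _ ≤ Measure.infinitePi (fun i => uniformOn (A i)) (concat hn ⁻¹' concatSet A) :=
        measure_mono fun ω hω i => by simpa using hω i trivial
    _ ≤ _ := Measure.le_map_apply (measurable_concat hn hK).aemeasurable _

theorem blockRatio_nonneg (j : ℕ) : 0 ≤ blockRatio K n A j :=
  div_nonneg (Finset.sum_nonneg fun _ _ => Real.log_natCast_nonneg _)
    (Finset.sum_nonneg fun _ _ => mul_nonneg (Nat.cast_nonneg _) (Real.log_natCast_nonneg _))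

theorem rpow_le_prod_card_of_lt_blockRatio (hK : 2 ≤ K) (hn : ∀ i, 0 < n i)
    (hA : ∀ i, (A i).Nonempty) {d : ℝ} {j : ℕ} (h : d < blockRatio K n A j) :
    (K : ℝ) ^ (d * blockStart n (j + 1)) ≤ ∏ i ∈ Finset.range j, (Nat.card (A i) : ℝ) := by
  have hcard : ∀ i, (0 : ℝ) < Nat.card (A i) := fun i =>
    Nat.cast_pos.2 (@Nat.card_pos _ (hA i).to_subtype (toFinite _))
  have hlogK : 0 < Real.log K := Real.log_pos (by exact_mod_cast hK)
  have hS : (0 : ℝ) < blockStart n (j + 1) := by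
    exact_mod_cast (le_blockStart hn (j + 1)).trans_lt' j.succ_pos
  have hden : ∑ i ∈ Finset.range (j + 1), (n i : ℝ) * Real.log K =
      blockStart n (j + 1) * Real.log K := by
    rw [← Finset.sum_mul, blockStart, Nat.cast_sum]
  rw [blockRatio, hden, lt_div_iff₀ (by positivity),
    ← Real.log_prod fun i _ => (hcard i).ne'] at h
  rw [Real.rpow_def_of_pos (by positivity), ← Real.exp_log (Finset.prod_pos fun i _ => hcard i)]
  exact Real.exp_le_exp.2 (by linarith)

theorem prod_inv_card_le_of_lt_blockRatio (hK : 2 ≤ K) (hn : ∀ i, 0 < n i)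
    (hA : ∀ i, (A i).Nonempty) {d : ℝ} {j : ℕ} (h : d < blockRatio K n A j) :
    ∏ i ∈ Finset.range j, (Nat.card (A i) : ℝ≥0∞)⁻¹ ≤
      ((K : ℝ≥0∞)⁻¹ ^ blockStart n (j + 1)) ^ d := by
  rw [← ENNReal.prod_inv_distrib fun _ _ _ _ _ => Or.inr (ENNReal.natCast_ne_top _),
    ← ENNReal.inv_pow, ENNReal.inv_rpow, ENNReal.inv_le_inv, ← ENNReal.rpow_natCast,
    ← ENNReal.rpow_mul, mul_comm, ← ENNReal.ofReal_natCast,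
    ENNReal.ofReal_rpow_of_pos (by positivity)]
  calc _ ≤ ENNReal.ofReal (∏ i ∈ Finset.range j, (Nat.card (A i) : ℝ)) :=
        ENNReal.ofReal_le_ofReal (rpow_le_prod_card_of_lt_blockRatio hK hn hA h)
    _ = _ := by rw [← Nat.cast_prod, ENNReal.ofReal_natCast, Nat.cast_prod]

theorem concatMeasure_cylinder_le_rpow (hK : 2 ≤ K) (hn : ∀ i, 0 < n i)
    (hA : ∀ i, (A i).Nonempty) {d : ℝ} (hd : 0 ≤ d) {J : ℕ}
    (hJ : ∀ j ≥ J, d < blockRatio K n A j) (x : SymbSp K) {m : ℕ} (hm : blockStart n J ≤ m) :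
    concatMeasure hn A (cylinder x m) ≤ ((K : ℝ≥0∞)⁻¹ ^ (m + 1)) ^ d := by
  set j := blockIndex hn m
  have hr : (K : ℝ≥0∞)⁻¹ ≤ 1 := ENNReal.inv_le_one.2 (by exact_mod_cast (by omega : 1 ≤ K))
  calc _ ≤ concatMeasure hn A (cylinder x (blockStart n j)) :=
        measure_mono (cylinder_anti x (blockStart_blockIndex_le hn m))
    _ ≤ ∏ i ∈ Finset.range j, (Nat.card (A i) : ℝ≥0∞)⁻¹ := concatMeasure_cylinder_le hK hn hA x j
    _ ≤ ((K : ℝ≥0∞)⁻¹ ^ blockStart n (j + 1)) ^ d :=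
        prod_inv_card_le_of_lt_blockRatio hK hn hA (hJ j (le_blockIndex hn hm))
    _ ≤ _ := ENNReal.rpow_le_rpow
        (pow_le_pow_right_of_le_one' hr (lt_blockStart_blockIndex_succ hn m)) hd

end SymbSp

/-- Let `K ≥ 2`, `(n_i)` positive integers, and `A_i ⊆ {0,…,K−1}^{n_i}`
nonempty with `a_i = #A_i`. Let `X ⊆ Σ_K` be the set of infinite concatenations
`ω_0ω_1⋯` with `ω_i ∈ A_i` (i.e. the sequences whose `i`-th block, starting at
`S i = n_0 + ⋯ + n_{i−1}`, belongs to `A_i`). Then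
`dim_H X ≥ liminf_j (∑_{i<j} ln a_i) / (∑_{i<j+1} n_i ln K)`. -/
theorem statement_11 (K : ℕ) (hK : 2 ≤ K) (n : ℕ → ℕ) (hn : ∀ i, 1 ≤ n i)
    (A : ∀ i : ℕ, Set (Fin (n i) → Fin K)) (hA : ∀ i, (A i).Nonempty) :
    ENNReal.ofReal
        (Filter.liminf (fun j : ℕ =>
          (∑ i ∈ Finset.range j, Real.log (Nat.card (A i))) /
            (∑ i ∈ Finset.range (j + 1), (n i : ℝ) * Real.log K)) Filter.atTop)
      ≤ dimH {x : SymbSp K |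
          ∀ i : ℕ, (fun j : Fin (n i) => x ((∑ l ∈ Finset.range i, n l) + j)) ∈ A i} := by
  change ENNReal.ofReal (liminf (SymbSp.blockRatio K n A) atTop) ≤ dimH (SymbSp.concatSet A)
  refine ENNReal.le_of_forall_pos_nnreal_lt fun d hd hdL => ?_
  rw [ENNReal.lt_ofReal_iff_toReal_lt ENNReal.coe_ne_top, ENNReal.coe_toReal] at hdL
  obtain ⟨J, hJ⟩ := eventually_atTop.1 <|
    eventually_lt_of_lt_liminf hdL (isBoundedUnder_of ⟨0, SymbSp.blockRatio_nonneg⟩)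
  have hμ : SymbSp.concatMeasure hn A ≤ μH[d] :=
    SymbSp.le_hausdorffMeasure_of_cylinder_le hK _ hd (blockStart n J) fun x _ hm =>
      SymbSp.concatMeasure_cylinder_le_rpow hK hn hA d.2 hJ x hm
  refine le_dimH_of_hausdorffMeasure_ne_zero (ne_of_gt ?_)
  calc 0 < SymbSp.concatMeasure hn A (SymbSp.concatSet A) := by
        rw [SymbSp.concatMeasure_concatSet hK hn hA]; simp
    _ ≤ _ := hμ _
end

section
/- Let K ≥ 2 and suppose (x,y) ∈ Σ_K × Σ_K is such that π_K(x,y) is a generic point for (H^1, σ_{K²}). Then for every integer k ≥ 0, the density spectrum μ({i ≥ 0 : ρ(σ_K^i(x),σ_K^i(y)) < K^{−k+1}}) equals the singleton {K^{−k}}. In particular, lim_{ε→0+} F_{x,y}(ε) = lim_{ε→0+} F*_{x,y}(ε) = 0, i.e. (x,y) ∈ E_{σ_K}([0,0]). -/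
open Filter Set MeasureTheory Topology TopologicalSpace

noncomputable section DistChaos

variable {X : Type*} [MetricSpace X]

/-- The lower distributional function `F_{x,y}(ε)`. -/
def lowF (f : X → X) (x y : X) (ε : ℝ) : ℝ :=
  Filter.liminf (fun n : ℕ =>
    (((Finset.range n).filter fun i => dist (f^[i] x) (f^[i] y) < ε).card : ℝ) / n)
    Filter.atTop

/-- The upper distributional function `F*_{x,y}(ε)`. -/
def uppF (f : X → X) (x y : X) (ε : ℝ) : ℝ :=
  Filter.limsup (fun n : ℕ =>
    (((Finset.range n).filter fun i => dist (f^[i] x) (f^[i] y) < ε).card : ℝ) / n)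
    Filter.atTop

/-- The set `E_f([p,q])`. -/
def Eset (f : X → X) (p q : ℝ) : Set (X × X) :=
  {z | Filter.Tendsto (fun ε => lowF f z.1 z.2 ε) (nhdsWithin 0 (Set.Ioi 0)) (nhds p) ∧
       Filter.Tendsto (fun ε => uppF f z.1 z.2 ε) (nhdsWithin 0 (Set.Ioi 0)) (nhds q)}

/-- The set `D_f([p,q])`. -/
def Dset (f : X → X) (p q : ℝ) : Set (X × X) :=
  {z | ∃ ε₀ > 0, ∀ ε : ℝ, 0 < ε → ε ≤ ε₀ →
        lowF f z.1 z.2 ε = p ∧ uppF f z.1 z.2 ε = q}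

end DistChaos

/-- The map `π_K : Σ_K × Σ_K → Σ_{K²}`, `(π_K(x₀,x₁))_i = x₀ᵢ + K·x₁ᵢ`. -/
def piK (K : ℕ) (z : SymbSp K × SymbSp K) : SymbSp (K ^ 2) :=
  fun i => ⟨(z.1 i : ℕ) + K * (z.2 i : ℕ), by
    have h1 := (z.1 i).isLt
    have h2 : ((z.2 i : ℕ) + 1) ≤ K := (z.2 i).isLt
    calc (z.1 i : ℕ) + K * (z.2 i : ℕ) < K + K * (z.2 i : ℕ) := Nat.add_lt_add_right h1 _
      _ = K * ((z.2 i : ℕ) + 1) := by ring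
      _ ≤ K * K := Nat.mul_le_mul_left _ h2
      _ = K ^ 2 := by ring⟩

/-!
If `K⁻¹ ^ k < ε ≤ K⁻¹ ^ k * K`, then `ρ(σ^i x, σ^i y) < ε` says exactly that `σ^i x` and
`σ^i y` agree on their first `k` symbols, i.e. that `σ_{K²}^i (π_K(x,y))` lies in the clopen
set `D_k` of sequences whose first `k` symbols are "diagonal" digits `a + K a`. Coordinatewise
symbol permutations are isometries of `Σ_L`, so `H¹` gives all cylinders of length `n` the same
mass `L^{-n}`, whence `H¹(D_k) = K^k · K^{-2k} = K^{-k}`. Genericity, applied to the indicator of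
`D_k`, makes the frequency of these times converge to `K^{-k}`. The density spectrum is therefore
`{K^{-k}}`, and `F(ε) = F*(ε) = K^{-k} < ε`, which tends to `0` with `ε`.
-/

open scoped ENNReal

theorem ncard_setOf_inter_Iio (p : ℕ → Prop) [DecidablePred p] (n : ℕ) :
    ({i | p i} ∩ Set.Iio n).ncard = ((Finset.range n).filter p).card := by
  rw [← Set.ncard_coe_finset]
  congr 1
  ext i
  simp [and_comm]

theorem Filter.Tendsto.setOf_mapClusterPt_eq {α X : Type*} [TopologicalSpace X] [T2Space X]
    {l : Filter α} [l.NeBot] {u : α → X} {a : X} (h : Tendsto u l (𝓝 a)) :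
    {r | MapClusterPt r l u} = {a} := by
  ext r
  refine ⟨fun hr => ?_, fun hr => hr ▸ h.mapClusterPt⟩
  exact eq_of_nhds_neBot (hr.neBot.mono (inf_le_inf_left _ h))

theorem digits_eq_of_add_mul_eq {K u v c d : ℕ} (hu : u < K) (hc : c < K)
    (h : u + K * v = c + K * d) : u = c ∧ v = d := by
  have hK : 0 < K := by omega
  constructor
  · simpa [Nat.add_mul_mod_self_left, Nat.mod_eq_of_lt hu, Nat.mod_eq_of_lt hc]
      using congrArg (· % K) h
  · simpa [Nat.add_mul_div_left _ _ hK, Nat.div_eq_of_lt hu, Nat.div_eq_of_lt hc]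
      using congrArg (· / K) h

namespace SymbSp

variable {L : ℕ}

theorem eq_of_dist_lt_inv_pow (hL : 1 < L) {x y : SymbSp L} {m : ℕ}
    (h : dist x y < (L : ℝ)⁻¹ ^ m) {j : ℕ} (hj : j ≤ m) : x j = y j := by
  classical
  by_cases hxy : x = y
  · rw [hxy]
  · change sdist x y < _ at h
    rw [sdist_eq hxy] at h
    have hL₀ : (0 : ℝ) < (L : ℝ)⁻¹ := by positivity
    have hL₁ : (L : ℝ)⁻¹ < 1 := inv_lt_one_of_one_lt₀ (by exact_mod_cast hL)
    have hm : m < Nat.find (exists_ne hxy) :=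
      (pow_lt_pow_iff_right_of_lt_one₀ hL₀ hL₁).mp h
    exact eq_of_lt_find hxy (hj.trans_lt hm)

theorem dist_lt_iff_forall_lt_eq (hL : 1 < L) {x y : SymbSp L} {k : ℕ} {ε : ℝ}
    (h₁ : (L : ℝ)⁻¹ ^ k < ε) (h₂ : ε ≤ (L : ℝ)⁻¹ ^ k * L) :
    dist x y < ε ↔ ∀ j < k, x j = y j := by
  refine ⟨fun h j hj => ?_, fun h => (sdist_le_of_agree h).trans_lt h₁⟩
  obtain ⟨m, rfl⟩ : ∃ m, k = m + 1 := ⟨k - 1, by omega⟩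
  have hL₀ : (L : ℝ) ≠ 0 := by positivity
  rw [pow_succ, inv_mul_cancel_right₀ hL₀] at h₂
  exact eq_of_dist_lt_inv_pow hL (h.trans_le h₂) (Nat.lt_succ_iff.mp hj)

theorem continuous_apply (hL : 1 < L) (j : ℕ) : Continuous fun z : SymbSp L => z j := by
  refine continuous_discrete_rng.2 fun c => Metric.isOpen_iff.2 fun z hz => ?_
  refine ⟨(L : ℝ)⁻¹ ^ j, by positivity, fun z' hz' => ?_⟩
  exact (eq_of_dist_lt_inv_pow hL (Metric.mem_ball.1 hz') le_rfl).trans hz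

def cyl {n : ℕ} (w : Fin n → Fin L) : Set (SymbSp L) := {z | ∀ j : Fin n, z j = w j}

theorem isClopen_cyl (hL : 1 < L) {n : ℕ} (w : Fin n → Fin L) : IsClopen (cyl w) := by
  have : cyl w = ⋂ j : Fin n, (fun z : SymbSp L => z j) ⁻¹' {w j} := by
    ext z
    simp [cyl]
  rw [this]
  exact isClopen_iInter_of_finite fun j =>
    (isClopen_discrete {w j}).preimage (continuous_apply hL j)

open Function in
theorem pairwise_disjoint_cyl (n : ℕ) :
    Pairwise (Disjoint on fun w : Fin n → Fin L => cyl w) := by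
  intro w w' hne
  refine Set.disjoint_left.2 fun z hz hz' => hne (funext fun j => ?_)
  rw [← hz j, hz' j]

theorem iUnion_cyl (n : ℕ) : ⋃ w : Fin n → Fin L, cyl w = Set.univ :=
  Set.eq_univ_of_forall fun z => Set.mem_iUnion.2 ⟨fun j => z j, fun _ => rfl⟩

def permCoord (e : ℕ → Equiv.Perm (Fin L)) : SymbSp L ≃ SymbSp L := Equiv.piCongrRight e

theorem isometry_permCoord (e : ℕ → Equiv.Perm (Fin L)) : Isometry (permCoord e) := by
  classical
  refine Isometry.of_dist_eq fun a b => ?_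
  by_cases hab : a = b
  · rw [hab, dist_self, dist_self]
  have heq : ∀ j, permCoord e a j = permCoord e b j ↔ a j = b j :=
    fun j => (e j).injective.eq_iff
  have hab' : permCoord e a ≠ permCoord e b := (Equiv.injective _).ne hab
  change sdist _ _ = sdist _ _
  rw [sdist_eq hab, sdist_eq hab', Nat.find_congr' fun {j} => not_congr (heq j)]

theorem hausdorffMeasure_cyl_eq (d : ℝ) {n : ℕ} (w w' : Fin n → Fin L) :
    μH[d] (cyl w) = μH[d] (cyl w') := by
  classical
  let e : ℕ → Equiv.Perm (Fin L) := fun j =>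
    if h : j < n then Equiv.swap (w ⟨j, h⟩) (w' ⟨j, h⟩) else 1
  have hpre : permCoord e ⁻¹' cyl w' = cyl w := by
    ext z
    refine forall_congr' fun j => ?_
    change e j (z j) = w' j ↔ z j = w j
    rw [show e j = Equiv.swap (w j) (w' j) from dif_pos j.2, Equiv.swap_apply_eq_iff,
      Equiv.swap_apply_right]
  rw [← hpre, (isometry_permCoord e).hausdorffMeasure_preimage
    (Or.inr (Equiv.surjective _)), Equiv.range_eq_univ, Set.inter_univ]

theorem hausdorffMeasure_cyl (hL : 1 < L) {d : ℝ}
    (huniv : μH[d] (Set.univ : Set (SymbSp L)) = 1) {n : ℕ} (w : Fin n → Fin L) :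
    μH[d] (cyl w) = ((L : ℝ≥0∞) ^ n)⁻¹ := by
  have hsum := measure_iUnion (μ := μH[d]) (pairwise_disjoint_cyl n)
    fun w' => (isClopen_cyl hL w').isOpen.measurableSet
  simp only [iUnion_cyl, huniv, tsum_fintype, hausdorffMeasure_cyl_eq d _ w, Finset.sum_const,
    Finset.card_univ, Fintype.card_fun, Fintype.card_fin, nsmul_eq_mul, Nat.cast_pow] at hsum
  exact ENNReal.eq_inv_of_mul_eq_one_left (by rw [mul_comm, hsum])

end SymbSp

open SymbSp

/-- The symbol of `Σ_{K²}` that `π_K` makes of the pair of symbols `(a, a)`. -/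
def diagDigit (K : ℕ) (a : Fin K) : Fin (K ^ 2) :=
  ⟨a + K * a, by have := a.isLt; nlinarith⟩

theorem diagDigit_injective (K : ℕ) : Function.Injective (diagDigit K) := fun a b h =>
  Fin.ext (digits_eq_of_add_mul_eq a.isLt b.isLt (congrArg Fin.val h)).1

def diagSet (K k : ℕ) : Set (SymbSp (K ^ 2)) := ⋃ w : Fin k → Fin K, cyl (diagDigit K ∘ w)

theorem isClopen_diagSet {K : ℕ} (hK : 1 < K) (k : ℕ) : IsClopen (diagSet K k) :=
  isClopen_iUnion_of_finite fun _ => isClopen_cyl (by nlinarith) _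

open Function in
theorem measureReal_diagSet {K : ℕ} (hK : 1 < K) {d : ℝ}
    (huniv : μH[d] (Set.univ : Set (SymbSp (K ^ 2))) = 1) (k : ℕ) :
    (μH[d] : Measure (SymbSp (K ^ 2))).real (diagSet K k) = (K : ℝ)⁻¹ ^ k := by
  have hK2 : 1 < K ^ 2 := by nlinarith
  have hdisj : Pairwise (Disjoint on fun w : Fin k → Fin K => cyl (diagDigit K ∘ w)) :=
    fun w w' hne => pairwise_disjoint_cyl k
      fun h => hne ((diagDigit_injective K).comp_left h)
  rw [diagSet, measureReal_iUnion_fintype hdisj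
    (fun w => (isClopen_cyl hK2 _).isOpen.measurableSet)
    fun w => by simp [hausdorffMeasure_cyl hK2 huniv]; omega]
  simp only [measureReal_def, hausdorffMeasure_cyl hK2 huniv, Finset.sum_const, Finset.card_univ,
    Fintype.card_fun, Fintype.card_fin, nsmul_eq_mul, ENNReal.toReal_inv, ENNReal.toReal_pow,
    ENNReal.toReal_natCast]
  push_cast
  rw [inv_pow, ← pow_mul, two_mul, pow_add, mul_inv, mul_inv_cancel_left₀ (by positivity)]

theorem mem_diagSet_piK_iff {K k : ℕ} (a b : SymbSp K) :
    piK K (a, b) ∈ diagSet K k ↔ ∀ j < k, a j = b j := by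
  simp only [diagSet, cyl, Set.mem_iUnion, Set.mem_ofPred_eq, Function.comp_apply]
  constructor
  · rintro ⟨w, hw⟩ j hj
    have hdig := digits_eq_of_add_mul_eq (a j).isLt (w ⟨j, hj⟩).isLt
      (congrArg Fin.val (hw ⟨j, hj⟩))
    exact Fin.ext (hdig.1.trans hdig.2.symm)
  · intro h
    exact ⟨fun j => a j, fun j => by simp [piK, diagDigit, h j j.2]⟩

theorem semiconj_piK_shift (K : ℕ) :
    Function.Semiconj (piK K) (Prod.map (shift K) (shift K)) (shift (K ^ 2)) :=
  fun _ => rfl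

theorem iterate_shift_piK (K : ℕ) (x y : SymbSp K) (i : ℕ) :
    (shift (K ^ 2))^[i] (piK K (x, y)) = piK K ((shift K)^[i] x, (shift K)^[i] y) := by
  rw [← (semiconj_piK_shift K).iterate_right i, Prod.map_iterate, Prod.map_apply]

section BirkhoffGeneric

variable {X : Type*} [TopologicalSpace X] [MeasurableSpace X]

/-- `z` is a generic point of `(μ, f)`: its empirical measures converge weak* to `μ`, tested
against bounded continuous functions. -/
def IsBirkhoffGeneric (μ : Measure X) (f : X → X) (z : X) : Prop :=
  ∀ g : BoundedContinuousFunction X ℝ,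
    Tendsto (fun j : ℕ => (∑ i ∈ Finset.range j, g (f^[i] z)) / j) atTop (𝓝 (∫ x, g x ∂μ))

namespace IsBirkhoffGeneric

variable {μ : Measure X} {f : X → X} {z : X}

theorem measure_univ (h : IsBirkhoffGeneric μ f z) : μ Set.univ = 1 := by
  have hone := h (BoundedContinuousFunction.const X 1)
  simp only [BoundedContinuousFunction.const_apply, Finset.sum_const, Finset.card_range,
    nsmul_eq_mul, mul_one, integral_const, smul_eq_mul] at hone
  have hdiv : Tendsto (fun j : ℕ => (j : ℝ) / j) atTop (𝓝 1) :=
    tendsto_const_nhds.congr' <| (eventually_ne_atTop 0).mono fun j hj =>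
      (div_self (Nat.cast_ne_zero.2 hj)).symm
  exact (ENNReal.toReal_eq_one_iff _).1 (tendsto_nhds_unique hone hdiv)

theorem tendsto_card_filter_mem_div [OpensMeasurableSpace X] (h : IsBirkhoffGeneric μ f z)
    {U : Set X} (hU : IsClopen U) [DecidablePred (· ∈ U)] :
    Tendsto (fun n : ℕ => (((Finset.range n).filter fun i => f^[i] z ∈ U).card : ℝ) / n) atTop
      (𝓝 (μ.real U)) := by
  have hind := h (BoundedContinuousFunction.indicator U hU)
  simp only [BoundedContinuousFunction.indicator_apply,
    integral_indicator_one hU.isOpen.measurableSet] at hind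
  refine hind.congr fun n => ?_
  rw [Finset.card_filter, Nat.cast_sum]
  congr 1
  refine Finset.sum_congr rfl fun i _ => ?_
  by_cases hi : f^[i] z ∈ U <;> simp [hi]

end IsBirkhoffGeneric

end BirkhoffGeneric

theorem mem_Eset_zero_zero {X : Type*} [MetricSpace X] {f : X → X} {x y : X}
    (h : ∀ᶠ ε in 𝓝[>] (0 : ℝ), ∃ c, 0 ≤ c ∧ c ≤ ε ∧ Tendsto (fun n : ℕ =>
      (((Finset.range n).filter fun i => dist (f^[i] x) (f^[i] y) < ε).card : ℝ) / n)
      atTop (𝓝 c)) :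
    (x, y) ∈ Eset f 0 0 := by
  have squeeze : ∀ F : ℝ → ℝ, (∀ᶠ ε in 𝓝[>] (0 : ℝ), 0 ≤ F ε ∧ F ε ≤ ε) →
      Tendsto F (𝓝[>] 0) (𝓝 0) := fun F hF =>
    tendsto_of_tendsto_of_tendsto_of_le_of_le' tendsto_const_nhds
      (tendsto_id.mono_left nhdsWithin_le_nhds) (hF.mono fun _ => And.left)
      (hF.mono fun _ => And.right)
  constructor
  · refine squeeze _ (h.mono fun ε ⟨c, hc₀, hcε, hc⟩ => ?_)
    rw [lowF, hc.liminf_eq]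
    exact ⟨hc₀, hcε⟩
  · refine squeeze _ (h.mono fun ε ⟨c, hc₀, hcε, hc⟩ => ?_)
    rw [uppF, hc.limsup_eq]
    exact ⟨hc₀, hcε⟩

theorem tendsto_card_filter_dist_lt_div {K : ℕ} (hK : 1 < K) {x y : SymbSp K}
    (hgen : IsBirkhoffGeneric μH[1] (shift (K ^ 2)) (piK K (x, y))) {k : ℕ} {ε : ℝ}
    (h₁ : (K : ℝ)⁻¹ ^ k < ε) (h₂ : ε ≤ (K : ℝ)⁻¹ ^ k * K) :
    Tendsto (fun n : ℕ => (((Finset.range n).filter fun i =>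
      dist ((shift K)^[i] x) ((shift K)^[i] y) < ε).card : ℝ) / n) atTop
      (𝓝 ((K : ℝ)⁻¹ ^ k)) := by
  classical
  have hfreq := hgen.tendsto_card_filter_mem_div (isClopen_diagSet hK k)
  rw [measureReal_diagSet hK hgen.measure_univ] at hfreq
  refine hfreq.congr fun n => ?_
  rw [Finset.filter_congr fun i _ => by
    rw [iterate_shift_piK, mem_diagSet_piK_iff, ← dist_lt_iff_forall_lt_eq hK h₁ h₂]]

/-- Let `K ≥ 2` and `(x,y) ∈ Σ_K × Σ_K` with `π_K(x,y)` a generic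
point of `(H¹, σ_{K²})` (empirical averages of every bounded continuous function
converge to its `H¹`-integral). Then for every `k ≥ 0` the density spectrum of
`{i : ρ(σ_K^i x, σ_K^i y) < K^{−k+1}}` is the singleton `{K^{−k}}`; in particular
`(x,y) ∈ E_{σ_K}([0,0])`. -/
theorem statement_19 (K : ℕ) (hK : 2 ≤ K) (x y : SymbSp K)
    (hgen : ∀ g : BoundedContinuousFunction (SymbSp (K ^ 2)) ℝ,
      Filter.Tendsto (fun j : ℕ =>
          (∑ i ∈ Finset.range j, g ((shift (K ^ 2))^[i] (piK K (x, y)))) / j)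
        Filter.atTop
        (nhds (∫ z, g z ∂(μH[1] : Measure (SymbSp (K ^ 2)))))) :
    (∀ k : ℕ,
      {r : ℝ | MapClusterPt r Filter.atTop (fun n : ℕ =>
        (({i : ℕ | dist ((shift K)^[i] x) ((shift K)^[i] y) < (K : ℝ) ^ (1 - (k : ℤ))} ∩
            Set.Iio n).ncard : ℝ) / n)} = {(K : ℝ) ^ (-(k : ℤ))}) ∧
    (x, y) ∈ Eset (shift K) 0 0 := by
  have hK₁ : 1 < K := hK
  have hK₀ : (0 : ℝ) < K := by positivity
  have hfreq := fun k ε => tendsto_card_filter_dist_lt_div hK₁ hgen (k := k) (ε := ε)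
  refine ⟨fun k => ?_, mem_Eset_zero_zero ?_⟩
  · have hthreshold : (K : ℝ) ^ (1 - (k : ℤ)) = (K : ℝ)⁻¹ ^ k * K := by
      rw [zpow_sub₀ hK₀.ne', zpow_one, zpow_natCast, inv_pow, inv_mul_eq_div]
    have hlimit : (K : ℝ) ^ (-(k : ℤ)) = (K : ℝ)⁻¹ ^ k := by
      rw [zpow_neg, zpow_natCast, inv_pow]
    have hlt : (K : ℝ)⁻¹ ^ k < (K : ℝ)⁻¹ ^ k * K :=
      lt_mul_of_one_lt_right (by positivity) (by exact_mod_cast hK₁)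
    simp only [ncard_setOf_inter_Iio, hlimit]
    exact (hfreq k _ (hthreshold ▸ hlt) hthreshold.le).setOf_mapClusterPt_eq
  · filter_upwards [Ioo_mem_nhdsGT one_pos] with ε ⟨hε₀, hε₁⟩
    obtain ⟨n, h₁, h₂⟩ := exists_nat_pow_near_of_lt_one hε₀ hε₁.le (inv_pos.2 hK₀)
      (inv_lt_one_of_one_lt₀ (by exact_mod_cast hK₁))
    refine ⟨_, by positivity, h₁.le, hfreq (n + 1) ε h₁ ?_⟩
    rwa [pow_succ, inv_mul_cancel_right₀ hK₀.ne']
end
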